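/- Fix T>0, B ∈ ℝ^{n×m}, α ∈ (0,1), and constants 0 < c ≤ C. Suppose A : [0,T] → ℝ^{n×n} and Σ : [0,T] → Sⁿ are of class H¹, Λ : [0,T] → Sⁿ is of class W^{1,1}, cI ≤ Σ_t ≤ CI for all t, and almost everywhere on [0,T]: Σ̇ = AΣ + ΣAᵀ + BBᵀ; −Λ̇ = ΛA + AᵀΛ − (1−α)ȦᵀȦ; the map t ↦ Ȧ_tΣ_t is of class W^{1,1} and ΛΣ = αA − (1−α) d/dt(ȦΣ). Then A is of class W^{2,1}, hence continuously differentiable on [0,T], and Σ is of class W^{3,1}, hence twice continuously differentiable on [0,T]. -/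

import Mathlib

open MeasureTheory Matrix Set

/-- `H¹` class with weak derivative `f'`. -/
def IsH1 {n : ℕ} (T : ℝ) (f f' : ℝ → Matrix (Fin n) (Fin n) ℝ) : Prop :=
  ContinuousOn f (Icc 0 T) ∧
  (∀ i j, MemLp (fun s => f' s i j) 2 (volume.restrict (Icc (0:ℝ) T))) ∧
  ∀ t ∈ Icc (0:ℝ) T, ∀ i j, f t i j = f 0 i j + ∫ s in (0:ℝ)..t, f' s i j

/-- `W^{1,1}` class with weak derivative `f'`. -/
def IsW11 {n : ℕ} (T : ℝ) (f f' : ℝ → Matrix (Fin n) (Fin n) ℝ) : Prop :=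
  ContinuousOn f (Icc 0 T) ∧
  (∀ i j, IntegrableOn (fun s => f' s i j) (Icc (0:ℝ) T)) ∧
  ∀ t ∈ Icc (0:ℝ) T, ∀ i j, f t i j = f 0 i j + ∫ s in (0:ℝ)..t, f' s i j

/-- Loewner order: `P ≤ Q` iff `Q − P` is positive semidefinite. -/
def LoewnerLE {n : ℕ} (P Q : Matrix (Fin n) (Fin n) ℝ) : Prop :=
  (Q - P).PosSemidef

/-!
Since `Σ ≥ cI`, `Σ` is invertible with continuous inverse, so `Ȧ = GΣ⁻¹` with `G = ȦΣ ∈ W^{1,1}`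
has a continuous representative, and a quotient rule for `W^{1,1}` functions shows that it is
`W^{1,1}`, i.e. `A ∈ W^{2,1}`. The quotient rule avoids differentiating `Σ⁻¹`: the primitive `P`
of the expected derivative satisfies the linear equation `(PΣ - G)' = (PΣ - G)Σ⁻¹Σ̇`, whose
coefficient is in `L¹`, with zero initial value, so `PΣ = G` by Grönwall. Differentiating
`Σ̇ = AΣ + ΣAᵀ + BBᵀ` twice by the product rule for absolutely continuous functions gives
`Σ ∈ W^{3,1}`, and continuity of the top derivatives gives the classical regularity.
-/

open Filter

lemma AbsolutelyContinuousOnInterval.congr {X : Type*} [PseudoMetricSpace X] {f g : ℝ → X}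
    {a b : ℝ}
    (hf : AbsolutelyContinuousOnInterval f a b) (hfg : EqOn f g (uIcc a b)) :
    AbsolutelyContinuousOnInterval g a b := by
  refine Tendsto.congr' ?_ hf
  rw [EventuallyEq, eventually_inf_principal]
  filter_upwards with E hE
  exact Finset.sum_congr rfl fun i hi => by rw [hfg (hE.1 i hi).1, hfg (hE.1 i hi).2]

structure ScalarW11 (T : ℝ) (u u' : ℝ → ℝ) : Prop where
  continuousOn : ContinuousOn u (Icc 0 T)
  integrableOn : IntegrableOn u' (Icc 0 T)
  eq_add_integral : ∀ t ∈ Icc (0:ℝ) T, u t = u 0 + ∫ s in (0:ℝ)..t, u' s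

lemma MeasureTheory.IntegrableOn.intervalIntegrable_of_mem_Icc {E : Type*}
    [NormedAddCommGroup E] {f : ℝ → E} {a b t : ℝ} (hf : IntegrableOn f (Icc a b))
    (ht : t ∈ Icc a b) : IntervalIntegrable f volume a t :=
  (intervalIntegrable_iff_integrableOn_Icc_of_le ht.1).2
    (hf.mono_set (Icc_subset_Icc le_rfl ht.2))

namespace ScalarW11

variable {T : ℝ} {u u' v v' : ℝ → ℝ}

lemma absolutelyContinuousOnInterval (hu : ScalarW11 T u u') {t : ℝ} (ht : t ∈ Icc 0 T) :
    AbsolutelyContinuousOnInterval u 0 t := by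
  have hconst : AbsolutelyContinuousOnInterval (fun _ => u 0) 0 t :=
    (LipschitzWith.const (u 0)).lipschitzOnWith.absolutelyContinuousOnInterval
  have hprim := (hu.integrableOn.intervalIntegrable_of_mem_Icc
    ht).absolutelyContinuousOnInterval_intervalIntegral (c := 0) left_mem_uIcc
  refine (hconst.add hprim).congr fun x hx => ?_
  rw [uIcc_of_le ht.1] at hx
  exact (hu.eq_add_integral x ⟨hx.1, hx.2.trans ht.2⟩).symm

lemma ae_hasDerivAt (hu : ScalarW11 T u u') :
    ∀ᵐ x, x ∈ Ioo 0 T → HasDerivAt u (u' x) x := by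
  by_cases hT : 0 ≤ T
  · filter_upwards [(hu.integrableOn.intervalIntegrable_of_mem_Icc
      ⟨hT, le_rfl⟩).ae_hasDerivAt_integral] with x hx hxT
    refine ((hx (Ioo_subset_Icc_self.trans Icc_subset_uIcc hxT) 0 left_mem_uIcc).const_add
      (u 0)).congr_of_eventuallyEq ?_
    filter_upwards [Ioo_mem_nhds hxT.1 hxT.2] with y hy
    exact hu.eq_add_integral y (Ioo_subset_Icc_self hy)
  · filter_upwards with x hx using absurd (hx.1.trans hx.2).le hT

lemma mul (hu : ScalarW11 T u u') (hv : ScalarW11 T v v') :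
    ScalarW11 T (fun t => u t * v t) (fun t => u' t * v t + u t * v' t) where
  continuousOn := hu.continuousOn.mul hv.continuousOn
  integrableOn := (hu.integrableOn.mul_continuousOn hv.continuousOn isCompact_Icc).add
    (hv.integrableOn.continuousOn_mul hu.continuousOn isCompact_Icc)
  eq_add_integral t ht := by
    have hFTC := (hu.absolutelyContinuousOnInterval ht).integral_deriv_mul_eq_sub
      (hv.absolutelyContinuousOnInterval ht)
    have hderiv : ∀ᵐ x, x ∈ uIoc 0 t →
        deriv u x * v x + u x * deriv v x = u' x * v x + u x * v' x := by
      filter_upwards [hu.ae_hasDerivAt, hv.ae_hasDerivAt, volume.ae_ne T] with x hux hvx hxT hx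
      rw [uIoc_of_le ht.1] at hx
      have hxT' : x ∈ Ioo 0 T := ⟨hx.1, lt_of_le_of_ne (hx.2.trans ht.2) hxT⟩
      rw [(hux hxT').deriv, (hvx hxT').deriv]
    rw [← intervalIntegral.integral_congr_ae hderiv, hFTC]
    ring

lemma primitive {p : ℝ → ℝ} (hp : IntegrableOn p (Icc 0 T)) (c : ℝ) :
    ScalarW11 T (fun t => c + ∫ s in (0:ℝ)..t, p s) p where
  continuousOn := continuousOn_const.add <|
    (intervalIntegral.continuousOn_primitive hp).congr fun x hx => by
      rw [intervalIntegral.integral_of_le hx.1]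
  integrableOn := hp
  eq_add_integral t _ := by simp

lemma add (hu : ScalarW11 T u u') (hv : ScalarW11 T v v') :
    ScalarW11 T (fun t => u t + v t) (fun t => u' t + v' t) where
  continuousOn := hu.continuousOn.add hv.continuousOn
  integrableOn := hu.integrableOn.add hv.integrableOn
  eq_add_integral t ht := by
    rw [intervalIntegral.integral_add (hu.integrableOn.intervalIntegrable_of_mem_Icc ht)
      (hv.integrableOn.intervalIntegrable_of_mem_Icc ht), hu.eq_add_integral t ht,
      hv.eq_add_integral t ht]
    ring

lemma sub (hu : ScalarW11 T u u') (hv : ScalarW11 T v v') :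
    ScalarW11 T (fun t => u t - v t) (fun t => u' t - v' t) where
  continuousOn := hu.continuousOn.sub hv.continuousOn
  integrableOn := hu.integrableOn.sub hv.integrableOn
  eq_add_integral t ht := by
    rw [intervalIntegral.integral_sub (hu.integrableOn.intervalIntegrable_of_mem_Icc ht)
      (hv.integrableOn.intervalIntegrable_of_mem_Icc ht), hu.eq_add_integral t ht,
      hv.eq_add_integral t ht]
    ring

lemma sum {ι : Type*} (s : Finset ι) {u u' : ι → ℝ → ℝ}
    (h : ∀ i ∈ s, ScalarW11 T (u i) (u' i)) :
    ScalarW11 T (fun t => ∑ i ∈ s, u i t) (fun t => ∑ i ∈ s, u' i t) where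
  continuousOn := continuousOn_finsetSum s fun i hi => (h i hi).continuousOn
  integrableOn := integrable_finsetSum s fun i hi => (h i hi).integrableOn
  eq_add_integral t ht := by
    rw [intervalIntegral.integral_finsetSum fun i hi =>
      (h i hi).integrableOn.intervalIntegrable_of_mem_Icc ht, ← Finset.sum_add_distrib]
    exact Finset.sum_congr rfl fun i hi => (h i hi).eq_add_integral t ht

lemma congr_deriv {w' : ℝ → ℝ} (hu : ScalarW11 T u u') (hw : IntegrableOn w' (Icc 0 T))
    (he : u' =ᵐ[volume.restrict (Icc 0 T)] w') : ScalarW11 T u w' where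
  continuousOn := hu.continuousOn
  integrableOn := hw
  eq_add_integral t ht := by
    rw [hu.eq_add_integral t ht, intervalIntegral.integral_of_le ht.1,
      intervalIntegral.integral_of_le ht.1,
      setIntegral_congr_ae measurableSet_Ioc (ae_imp_of_ae_restrict
        (ae_restrict_of_ae_restrict_of_subset (Ioc_subset_Icc_self.trans
          (Icc_subset_Icc le_rfl ht.2)) he))]

end ScalarW11

section Gronwall

variable {T : ℝ} {k H : ℝ → ℝ}

lemma integral_mul_primitive_pow (hk : IntegrableOn k (Icc 0 T)) (N : ℕ) {t : ℝ}
    (ht : t ∈ Icc 0 T) :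
    ∫ s in (0:ℝ)..t, k s * (∫ r in (0:ℝ)..s, k r) ^ N
      = (∫ r in (0:ℝ)..t, k r) ^ (N + 1) / (N + 1) := by
  have hpow : ∀ j : ℕ, ScalarW11 T (fun t => (∫ r in (0:ℝ)..t, k r) ^ (j + 1))
      (fun t => (j + 1) * (k t * (∫ r in (0:ℝ)..t, k r) ^ j)) := by
    intro j
    induction j with
    | zero => simpa using ScalarW11.primitive hk 0
    | succ j ih =>
      convert (ScalarW11.primitive hk 0).mul ih using 1 <;> ext t <;> push_cast <;> ring
  have := (hpow N).eq_add_integral t ht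
  rw [intervalIntegral.integral_const_mul] at this
  simp only [intervalIntegral.integral_same, zero_pow (Nat.succ_ne_zero N), zero_add] at this
  field_simp
  linarith

lemma le_mul_primitive_pow_div_factorial (hk : IntegrableOn k (Icc 0 T))
    (hk0 : ∀ s ∈ Icc 0 T, 0 ≤ k s) (hH : ContinuousOn H (Icc 0 T)) {M : ℝ}
    (hM : ∀ t ∈ Icc 0 T, H t ≤ M) (hle : ∀ t ∈ Icc 0 T, H t ≤ ∫ s in (0:ℝ)..t, k s * H s)
    (N : ℕ) : ∀ t ∈ Icc 0 T, H t ≤ M * (∫ r in (0:ℝ)..t, k r) ^ N / N.factorial := by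
  induction N with
  | zero => simpa using hM
  | succ N ih =>
    intro t ht
    have hsub : Icc 0 t ⊆ Icc 0 T := Icc_subset_Icc le_rfl ht.2
    have hΦ : ContinuousOn (fun s => ∫ r in (0:ℝ)..s, k r) (Icc 0 T) :=
      (ScalarW11.primitive hk 0).continuousOn.congr fun s _ => (zero_add _).symm
    calc H t ≤ ∫ s in (0:ℝ)..t, k s * H s := hle t ht
      _ ≤ ∫ s in (0:ℝ)..t, M / N.factorial * (k s * (∫ r in (0:ℝ)..s, k r) ^ N) := by
        refine intervalIntegral.integral_mono_on ht.1
          ((hk.mul_continuousOn hH isCompact_Icc).intervalIntegrable_of_mem_Icc ht)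
          (((hk.mul_continuousOn (hΦ.pow N) isCompact_Icc).intervalIntegrable_of_mem_Icc
            ht).const_mul _) fun s hs => ?_
        calc k s * H s ≤ k s * (M * (∫ r in (0:ℝ)..s, k r) ^ N / N.factorial) :=
              mul_le_mul_of_nonneg_left (ih s (hsub hs)) (hk0 s (hsub hs))
          _ = _ := by ring
      _ = M * (∫ r in (0:ℝ)..t, k r) ^ (N + 1) / (N + 1).factorial := by
        rw [intervalIntegral.integral_const_mul, integral_mul_primitive_pow hk N ht,
          Nat.factorial_succ]
        push_cast
        field_simp

lemma eq_zero_of_le_integral_mul (hk : IntegrableOn k (Icc 0 T))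
    (hk0 : ∀ s ∈ Icc 0 T, 0 ≤ k s) (hH : ContinuousOn H (Icc 0 T))
    (hH0 : ∀ t ∈ Icc 0 T, 0 ≤ H t) (hle : ∀ t ∈ Icc 0 T, H t ≤ ∫ s in (0:ℝ)..t, k s * H s) :
    ∀ t ∈ Icc 0 T, H t = 0 := by
  obtain ⟨M, hM⟩ := isCompact_Icc.exists_bound_of_continuousOn hH
  intro t ht
  refine le_antisymm (ge_of_tendsto (x := atTop) ?_ (Eventually.of_forall fun N =>
    le_mul_primitive_pow_div_factorial hk hk0 hH (fun s hs => (le_abs_self _).trans (hM s hs))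
      hle N t ht)) (hH0 t ht)
  simpa [mul_div_assoc] using
    (FloorSemiring.tendsto_pow_div_factorial_atTop (∫ r in (0:ℝ)..t, k r)).const_mul M

end Gronwall

section MatrixW11

variable {n : ℕ} {T : ℝ}

lemma ContinuousOn.matrix_entry {X ι κ R : Type*} [TopologicalSpace X] [TopologicalSpace R]
    {f : X → Matrix ι κ R} {s : Set X} (hf : ContinuousOn f s) (i : ι) (j : κ) :
    ContinuousOn (fun t => f t i j) s :=
  (continuous_apply_apply i j).comp_continuousOn hf

lemma isW11_iff_forall_entry {f f' : ℝ → Matrix (Fin n) (Fin n) ℝ} :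
    IsW11 T f f' ↔ ∀ i j, ScalarW11 T (fun t => f t i j) (fun t => f' t i j) :=
  ⟨fun h i j => ⟨h.1.matrix_entry i j, h.2.1 i j, fun t ht => h.2.2 t ht i j⟩,
    fun h => ⟨continuousOn_pi.2 fun i => continuousOn_pi.2 fun j => (h i j).continuousOn,
      fun i j => (h i j).integrableOn, fun t ht i j => (h i j).eq_add_integral t ht⟩⟩

lemma integrableOn_mul_of_continuousOn {ι κ μ : Type*} [Fintype κ] {K : Set ℝ}
    (hK : IsCompact K) {M : ℝ → Matrix ι κ ℝ} {N : ℝ → Matrix κ μ ℝ}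
    (hM : ∀ i j, IntegrableOn (fun t => M t i j) K) (hN : ContinuousOn N K) (i : ι) (j : μ) :
    IntegrableOn (fun t => (M t * N t) i j) K := by
  simp_rw [Matrix.mul_apply]
  exact integrable_finsetSum _ fun k _ => (hM i k).mul_continuousOn (hN.matrix_entry k j) hK

lemma integrableOn_continuousOn_mul {ι κ μ : Type*} [Fintype κ] {K : Set ℝ}
    (hK : IsCompact K) {M : ℝ → Matrix ι κ ℝ} {N : ℝ → Matrix κ μ ℝ} (hM : ContinuousOn M K)
    (hN : ∀ i j, IntegrableOn (fun t => N t i j) K) (i : ι) (j : μ) :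
    IntegrableOn (fun t => (M t * N t) i j) K := by
  simp_rw [Matrix.mul_apply]
  exact integrable_finsetSum _ fun k _ => (hN k j).continuousOn_mul (hM.matrix_entry i k) hK

namespace IsW11

variable {f f' g g' : ℝ → Matrix (Fin n) (Fin n) ℝ}

lemma entry (h : IsW11 T f f') (i j : Fin n) :
    ScalarW11 T (fun t => f t i j) (fun t => f' t i j) :=
  isW11_iff_forall_entry.1 h i j

lemma add (hf : IsW11 T f f') (hg : IsW11 T g g') :
    IsW11 T (fun t => f t + g t) (fun t => f' t + g' t) :=
  isW11_iff_forall_entry.2 fun i j => (hf.entry i j).add (hg.entry i j)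

lemma sub (hf : IsW11 T f f') (hg : IsW11 T g g') :
    IsW11 T (fun t => f t - g t) (fun t => f' t - g' t) :=
  isW11_iff_forall_entry.2 fun i j => (hf.entry i j).sub (hg.entry i j)

lemma mul (hf : IsW11 T f f') (hg : IsW11 T g g') :
    IsW11 T (fun t => f t * g t) (fun t => f' t * g t + f t * g' t) := by
  refine isW11_iff_forall_entry.2 fun i j => ?_
  convert ScalarW11.sum Finset.univ fun k _ => (hf.entry i k).mul (hg.entry k j) using 1
  · ext t; simp [Matrix.mul_apply]
  · ext t; simp [Matrix.mul_apply, Finset.sum_add_distrib]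

lemma transpose (hf : IsW11 T f f') : IsW11 T (fun t => (f t)ᵀ) (fun t => (f' t)ᵀ) :=
  isW11_iff_forall_entry.2 fun i j => hf.entry j i

lemma const (T : ℝ) (M : Matrix (Fin n) (Fin n) ℝ) : IsW11 T (fun _ => M) (fun _ => 0) :=
  ⟨continuousOn_const, fun _ _ => integrableOn_zero, fun _ _ _ _ => by simp⟩

lemma congr_deriv {h' : ℝ → Matrix (Fin n) (Fin n) ℝ} (hf : IsW11 T f f')
    (hh : ∀ i j, IntegrableOn (fun t => h' t i j) (Icc 0 T))
    (he : ∀ᵐ t ∂(volume.restrict (Icc 0 T)), f' t = h' t) : IsW11 T f h' :=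
  isW11_iff_forall_entry.2 fun i j => (hf.entry i j).congr_deriv (hh i j) <| by
    filter_upwards [he] with t ht using by rw [ht]

lemma congr_fun (hf : IsW11 T f f') (hT : 0 ≤ T) (hfg : EqOn f g (Icc 0 T)) : IsW11 T g f' :=
  ⟨hf.1.congr hfg.symm, hf.2.1, fun t ht i j => by
    rw [← hfg ht, ← hfg ⟨le_rfl, hT⟩]; exact hf.2.2 t ht i j⟩

lemma primitive {p : ℝ → Matrix (Fin n) (Fin n) ℝ}
    (hp : ∀ i j, IntegrableOn (fun t => p t i j) (Icc 0 T)) (c : Matrix (Fin n) (Fin n) ℝ) :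
    IsW11 T (fun t => Matrix.of fun i j => c i j + ∫ s in (0:ℝ)..t, p s i j) p :=
  isW11_iff_forall_entry.2 fun i j => ScalarW11.primitive (hp i j) (c i j)

end IsW11

end MatrixW11

section SumAbsEntries

variable {l m n : Type*} [Fintype l] [Fintype m] [Fintype n]

def sumAbsEntries (M : Matrix m n ℝ) : ℝ := ∑ i, ∑ j, |M i j|

lemma sumAbsEntries_nonneg (M : Matrix m n ℝ) : 0 ≤ sumAbsEntries M :=
  Finset.sum_nonneg fun _ _ => Finset.sum_nonneg fun _ _ => abs_nonneg _

lemma sumAbsEntries_eq_zero {M : Matrix m n ℝ} (h : sumAbsEntries M = 0) : M = 0 := by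
  ext i j
  have hrow := (Finset.sum_eq_zero_iff_of_nonneg fun _ _ =>
    Finset.sum_nonneg fun _ _ => abs_nonneg _).1 h i (Finset.mem_univ i)
  simpa using (Finset.sum_eq_zero_iff_of_nonneg fun _ _ => abs_nonneg _).1 hrow j
    (Finset.mem_univ j)

lemma sumAbsEntries_mul_le (X : Matrix l m ℝ) (Y : Matrix m n ℝ) :
    sumAbsEntries (X * Y) ≤ sumAbsEntries X * sumAbsEntries Y := by
  calc sumAbsEntries (X * Y) ≤ ∑ i, ∑ j, ∑ k, |X i k| * |Y k j| := by
        refine Finset.sum_le_sum fun i _ => Finset.sum_le_sum fun j _ => ?_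
        simp_rw [Matrix.mul_apply, ← abs_mul]
        exact Finset.abs_sum_le_sum_abs _ _
    _ = ∑ i, ∑ k, |X i k| * ∑ j, |Y k j| := by
        simp_rw [Finset.mul_sum]; exact Finset.sum_congr rfl fun _ _ => Finset.sum_comm
    _ ≤ ∑ i, ∑ k, |X i k| * sumAbsEntries Y := by
        gcongr with i _ k _
        exact Finset.single_le_sum (f := fun k => ∑ j, |Y k j|)
          (fun _ _ => Finset.sum_nonneg fun _ _ => abs_nonneg _) (Finset.mem_univ k)
    _ = sumAbsEntries X * sumAbsEntries Y := by
        simp_rw [sumAbsEntries, Finset.sum_mul]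

lemma integrableOn_sumAbsEntries {K : Set ℝ} {M : ℝ → Matrix m n ℝ}
    (hM : ∀ i j, IntegrableOn (fun t => M t i j) K) :
    IntegrableOn (fun t => sumAbsEntries (M t)) K :=
  integrable_finsetSum _ fun i _ => integrable_finsetSum _ fun j _ => (hM i j).abs

end SumAbsEntries

lemma IsW11.eq_zero_of_deriv_eq_mul {n : ℕ} {T : ℝ} {h h' M : ℝ → Matrix (Fin n) (Fin n) ℝ}
    (hh : IsW11 T h h') (hM : ∀ i j, IntegrableOn (fun t => M t i j) (Icc 0 T))
    (hderiv : ∀ᵐ t ∂(volume.restrict (Icc 0 T)), h' t = h t * M t) (h0 : h 0 = 0) :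
    ∀ t ∈ Icc 0 T, h t = 0 := by
  have hk := integrableOn_sumAbsEntries hM
  have hH : ContinuousOn (fun t => sumAbsEntries (h t)) (Icc 0 T) :=
    continuousOn_finsetSum _ fun i _ => continuousOn_finsetSum _ fun j _ =>
      (hh.1.matrix_entry i j).abs
  have hle : ∀ t ∈ Icc 0 T,
      sumAbsEntries (h t) ≤ ∫ s in (0:ℝ)..t, sumAbsEntries (M s) * sumAbsEntries (h s) := by
    intro t ht
    have hint : ∀ i j, IntervalIntegrable (fun s => h' s i j) volume 0 t := fun i j =>
      (hh.2.1 i j).intervalIntegrable_of_mem_Icc ht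
    calc sumAbsEntries (h t) = ∑ i, ∑ j, |∫ s in (0:ℝ)..t, h' s i j| := by
          simp [sumAbsEntries, fun i j => hh.2.2 t ht i j, h0]
      _ ≤ ∑ i, ∑ j, ∫ s in (0:ℝ)..t, |h' s i j| := by
          gcongr with i _ j _
          exact intervalIntegral.abs_integral_le_integral_abs ht.1
      _ = ∫ s in (0:ℝ)..t, sumAbsEntries (h' s) := by
          unfold sumAbsEntries
          rw [intervalIntegral.integral_finsetSum fun i _ =>
            IntegrableOn.intervalIntegrable_of_mem_Icc
              (integrable_finsetSum _ fun j _ => (hh.2.1 i j).abs) ht]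
          exact Finset.sum_congr rfl fun i _ => (intervalIntegral.integral_finsetSum
            fun j _ => (hint i j).abs).symm
      _ ≤ ∫ s in (0:ℝ)..t, sumAbsEntries (M s) * sumAbsEntries (h s) := by
          refine intervalIntegral.integral_mono_ae_restrict ht.1
            ((integrableOn_sumAbsEntries hh.2.1).intervalIntegrable_of_mem_Icc ht)
            ((hk.mul_continuousOn hH isCompact_Icc).intervalIntegrable_of_mem_Icc ht) ?_
          filter_upwards [ae_restrict_of_ae_restrict_of_subset
            (Icc_subset_Icc le_rfl ht.2) hderiv] with s hs
          rw [hs, mul_comm (sumAbsEntries (M s))]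
          exact sumAbsEntries_mul_le _ _
  exact fun t ht => sumAbsEntries_eq_zero <| eq_zero_of_le_integral_mul hk
    (fun s _ => sumAbsEntries_nonneg _) hH (fun s _ => sumAbsEntries_nonneg _) hle t ht

lemma ContinuousOn.matrix_inv {X ι : Type*} [TopologicalSpace X] [Fintype ι] [DecidableEq ι]
    {S : X → Matrix ι ι ℝ} {s : Set X} (hS : ContinuousOn S s)
    (hdet : ∀ t ∈ s, IsUnit (S t).det) : ContinuousOn (fun t => (S t)⁻¹) s := fun t ht =>
  (continuousAt_matrix_inv _
    (NormedRing.inverse_continuousAt (hdet t ht).unit)).comp_continuousWithinAt (hS t ht)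

lemma IsW11.mul_inv {n : ℕ} {T : ℝ} {G G' S S' : ℝ → Matrix (Fin n) (Fin n) ℝ} (hT : 0 ≤ T)
    (hG : IsW11 T G G') (hS : IsW11 T S S') (hdet : ∀ t ∈ Icc 0 T, IsUnit (S t).det) :
    IsW11 T (fun t => G t * (S t)⁻¹) (fun t => (G' t - G t * (S t)⁻¹ * S' t) * (S t)⁻¹) := by
  set Q := fun t => G t * (S t)⁻¹
  set Q' := fun t => (G' t - Q t * S' t) * (S t)⁻¹
  have hSi : ContinuousOn (fun t => (S t)⁻¹) (Icc 0 T) := hS.1.matrix_inv hdet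
  have hQ : ContinuousOn Q (Icc 0 T) := hG.1.mul hSi
  have hQ' : ∀ i j, IntegrableOn (fun t => Q' t i j) (Icc 0 T) :=
    integrableOn_mul_of_continuousOn isCompact_Icc (fun i j =>
      (hG.2.1 i j).sub (integrableOn_continuousOn_mul isCompact_Icc hQ hS.2.1 i j)) hSi
  set P := fun t => Matrix.of fun i j => Q 0 i j + ∫ s in (0:ℝ)..t, Q' s i j
  have hP : IsW11 T P Q' := IsW11.primitive hQ' (Q 0)
  have hdefect : ∀ t ∈ Icc 0 T, P t * S t - G t = 0 := by
    refine ((hP.mul hS).sub hG).eq_zero_of_deriv_eq_mul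
      (integrableOn_continuousOn_mul isCompact_Icc hSi hS.2.1) ?_ ?_
    · filter_upwards [ae_restrict_mem measurableSet_Icc] with t ht
      simp only [Q', Q, Matrix.nonsing_inv_mul_cancel_right (S t) _ (hdet t ht), Matrix.sub_mul,
        Matrix.mul_assoc, Matrix.mul_nonsing_inv_cancel_left (S t) _ (hdet t ht)]
      abel
    · have hP0 : P 0 = Q 0 := by ext i j; simp [P]
      simp only [hP0, Q, Matrix.nonsing_inv_mul_cancel_right (S 0) _ (hdet 0 ⟨le_rfl, hT⟩),
        sub_self]
  refine hP.congr_fun hT fun t ht => ?_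
  rw [← Matrix.mul_nonsing_inv_cancel_right (S t) (P t) (hdet t ht), sub_eq_zero.1 (hdefect t ht)]

lemma ContinuousOn.exists_continuous_eqOn_Icc {a b : ℝ} {p : ℝ → ℝ} (hab : a ≤ b)
    (hp : ContinuousOn p (Icc a b)) : ∃ q : ℝ → ℝ, Continuous q ∧ EqOn q p (Icc a b) :=
  ⟨IccExtend hab ((Icc a b).domRestrict p), continuous_IccExtend_iff.2 hp.domRestrict,
    fun _ hx => IccExtend_of_mem hab _ hx⟩

lemma ScalarW11.exists_contDiff_eqOn {T : ℝ} {u u' q : ℝ → ℝ} {k : ℕ} (hu : ScalarW11 T u u')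
    (hq : ContDiff ℝ k q) (hqu : EqOn q u' (Icc 0 T)) :
    ∃ F : ℝ → ℝ, ContDiff ℝ (k + 1) F ∧ EqOn F u (Icc 0 T) := by
  have hF : ∀ x, HasDerivAt (fun x => u 0 + ∫ s in (0:ℝ)..x, q s) (q x) x := fun x =>
    ((hq.continuous.integral_hasStrictDerivAt 0 x).hasDerivAt).const_add _
  refine ⟨fun x => u 0 + ∫ s in (0:ℝ)..x, q s, ?_, fun t ht => ?_⟩
  · rw [contDiff_succ_iff_deriv]
    refine ⟨fun x => (hF x).differentiableAt, by simp, ?_⟩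
    rwa [funext fun x => (hF x).deriv]
  · rw [hu.eq_add_integral t ht]
    refine congrArg _ (intervalIntegral.integral_congr fun s hs => hqu ?_)
    rw [uIcc_of_le ht.1] at hs
    exact ⟨hs.1, hs.2.trans ht.2⟩

namespace IsW11

variable {n : ℕ} {T : ℝ} {f f₁ f₂ : ℝ → Matrix (Fin n) (Fin n) ℝ}

lemma contDiffOn_one_entry (hT : 0 ≤ T) (hf : IsW11 T f f₁) (hf₁ : ContinuousOn f₁ (Icc 0 T))
    (i j : Fin n) : ContDiffOn ℝ 1 (fun t => f t i j) (Icc 0 T) := by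
  obtain ⟨q, hq, hqe⟩ := (hf₁.matrix_entry i j).exists_continuous_eqOn_Icc hT
  obtain ⟨F, hF, hFe⟩ := (hf.entry i j).exists_contDiff_eqOn (k := 0) (contDiff_zero.2 hq) hqe
  exact hF.contDiffOn.congr fun x hx => (hFe hx).symm

lemma contDiffOn_two_entry (hT : 0 ≤ T) (hf : IsW11 T f f₁) (hf₁ : IsW11 T f₁ f₂)
    (hf₂ : ContinuousOn f₂ (Icc 0 T)) (i j : Fin n) :
    ContDiffOn ℝ 2 (fun t => f t i j) (Icc 0 T) := by
  obtain ⟨q, hq, hqe⟩ := (hf₂.matrix_entry i j).exists_continuous_eqOn_Icc hT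
  obtain ⟨F₁, hF₁, hF₁e⟩ :=
    (hf₁.entry i j).exists_contDiff_eqOn (k := 0) (contDiff_zero.2 hq) hqe
  obtain ⟨F, hF, hFe⟩ := (hf.entry i j).exists_contDiff_eqOn (k := 1) hF₁ hF₁e
  exact hF.contDiffOn.congr fun x hx => (hFe hx).symm

end IsW11

lemma IsH1.isW11 {n : ℕ} {T : ℝ} {f f' : ℝ → Matrix (Fin n) (Fin n) ℝ} (hf : IsH1 T f f') :
    IsW11 T f f' :=
  ⟨hf.1, fun i j => (hf.2.1 i j).integrable one_le_two, hf.2.2⟩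

lemma LoewnerLE.posDef {n : ℕ} {c : ℝ} {M : Matrix (Fin n) (Fin n) ℝ} (hc : 0 < c)
    (h : LoewnerLE (c • (1 : Matrix (Fin n) (Fin n) ℝ)) M) : M.PosDef := by
  simpa using (Matrix.PosDef.one.smul hc).add_posSemidef h

theorem regularity_upgrade_general
    {n m : ℕ} (T c C : ℝ) (hT : 0 < T)
    (hc : 0 < c)
    (B : Matrix (Fin n) (Fin m) ℝ)
    (A A' S S' G G' : ℝ → Matrix (Fin n) (Fin n) ℝ)
    (hA : IsH1 T A A') (hS : IsH1 T S S')
    (hbounds : ∀ t ∈ Icc (0:ℝ) T,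
      LoewnerLE (c • (1 : Matrix (Fin n) (Fin n) ℝ)) (S t) ∧
      LoewnerLE (S t) (C • (1 : Matrix (Fin n) (Fin n) ℝ)))
    (hdyn : ∀ᵐ t ∂(volume.restrict (Icc (0:ℝ) T)),
      S' t = A t * S t + S t * (A t)ᵀ + B * Bᵀ)
    (hG : ∀ᵐ t ∂(volume.restrict (Icc (0:ℝ) T)), G t = A' t * S t)
    (hGW11 : IsW11 T G G') :
    -- A ∈ W^{2,1}, hence C¹ on [0,T]
    (∃ A1 A2 : ℝ → Matrix (Fin n) (Fin n) ℝ,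
      (∀ᵐ t ∂(volume.restrict (Icc (0:ℝ) T)), A1 t = A' t) ∧
      IsW11 T A A1 ∧ IsW11 T A1 A2 ∧
      (∀ i j, ContDiffOn ℝ 1 (fun t => A t i j) (Icc (0:ℝ) T))) ∧
    -- Σ ∈ W^{3,1}, hence C² on [0,T]
    (∃ S1 S2 S3 : ℝ → Matrix (Fin n) (Fin n) ℝ,
      (∀ᵐ t ∂(volume.restrict (Icc (0:ℝ) T)), S1 t = S' t) ∧
      IsW11 T S S1 ∧ IsW11 T S1 S2 ∧ IsW11 T S2 S3 ∧
      (∀ i j, ContDiffOn ℝ 2 (fun t => S t i j) (Icc (0:ℝ) T))) := by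
  have hdet : ∀ t ∈ Icc 0 T, IsUnit (S t).det := fun t ht =>
    isUnit_iff_ne_zero.2 ((hbounds t ht).1.posDef hc).det_pos.ne'
  have hA₁A₂ := hGW11.mul_inv hT.le hS.isW11 hdet
  have hA₁ : ∀ᵐ t ∂(volume.restrict (Icc 0 T)), G t * (S t)⁻¹ = A' t := by
    filter_upwards [hG, ae_restrict_mem measurableSet_Icc] with t hGt ht
    rw [hGt, Matrix.mul_nonsing_inv_cancel_right _ _ (hdet t ht)]
  have hAA₁ : IsW11 T A (fun t => G t * (S t)⁻¹) := hA.isW11.congr_deriv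
    (fun i j => (hA₁A₂.1.matrix_entry i j).integrableOn_Icc) (hA₁.mono fun _ h => h.symm)
  have hS₁ : ContinuousOn (fun t => A t * S t + S t * (A t)ᵀ + B * Bᵀ) (Icc 0 T) :=
    ((hA.1.mul hS.1).add (hS.1.mul hAA₁.transpose.1)).add continuousOn_const
  have hSS₁ := hS.isW11.congr_deriv (fun i j => (hS₁.matrix_entry i j).integrableOn_Icc) hdyn
  have hS₁S₂ := ((hAA₁.mul hSS₁).add (hSS₁.mul hAA₁.transpose)).add (IsW11.const T (B * Bᵀ))
  have hS₂S₃ := (((hA₁A₂.mul hSS₁).add (hAA₁.mul hS₁S₂)).add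
    ((hS₁S₂.mul hAA₁.transpose).add (hSS₁.mul hA₁A₂.transpose))).add (IsW11.const T 0)
  exact ⟨⟨_, _, hA₁, hAA₁, hA₁A₂, hAA₁.contDiffOn_one_entry hT.le hA₁A₂.1⟩,
    ⟨_, _, _, hdyn.mono fun _ h => h.symm, hSS₁, hS₁S₂, hS₂S₃,
      hSS₁.contDiffOn_two_entry hT.le hS₁S₂ hS₂S₃.1⟩⟩

/-- regularity upgrade from the first-order necessary conditions.
If `(A,Σ,Λ)` satisfy the primal, adjoint, and stationarity equations with uniform
spectral bounds `cI ≤ Σ ≤ CI`, then `A ∈ W^{2,1}` (hence `C¹` on `[0,T]`) and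
`Σ ∈ W^{3,1}` (hence `C²` on `[0,T]`), in the sense that their weak derivatives admit
representatives of the corresponding Sobolev classes. -/
theorem regularity_upgrade
    {n m : ℕ} (T α c C : ℝ) (hT : 0 < T) (hα : α ∈ Set.Ioo (0:ℝ) 1)
    (hc : 0 < c) (hcC : c ≤ C)
    (B : Matrix (Fin n) (Fin m) ℝ)
    (A A' S S' Lam Lam' G G' : ℝ → Matrix (Fin n) (Fin n) ℝ)
    (hA : IsH1 T A A') (hS : IsH1 T S S')
    (hSsymm : ∀ t ∈ Icc (0:ℝ) T, (S t).IsSymm)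
    (hLam : IsW11 T Lam Lam')
    (hLamSymm : ∀ t ∈ Icc (0:ℝ) T, (Lam t).IsSymm)
    (hbounds : ∀ t ∈ Icc (0:ℝ) T,
      LoewnerLE (c • (1 : Matrix (Fin n) (Fin n) ℝ)) (S t) ∧
      LoewnerLE (S t) (C • (1 : Matrix (Fin n) (Fin n) ℝ)))
    (hdyn : ∀ᵐ t ∂(volume.restrict (Icc (0:ℝ) T)),
      S' t = A t * S t + S t * (A t)ᵀ + B * Bᵀ)
    (hadj : ∀ᵐ t ∂(volume.restrict (Icc (0:ℝ) T)),
      -(Lam' t) = Lam t * A t + (A t)ᵀ * Lam t - (1 - α) • ((A' t)ᵀ * A' t))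
    (hG : ∀ᵐ t ∂(volume.restrict (Icc (0:ℝ) T)), G t = A' t * S t)
    (hGW11 : IsW11 T G G')
    (hstat : ∀ᵐ t ∂(volume.restrict (Icc (0:ℝ) T)),
      Lam t * S t = α • A t - (1 - α) • G' t) :
    -- A ∈ W^{2,1}, hence C¹ on [0,T]
    (∃ A1 A2 : ℝ → Matrix (Fin n) (Fin n) ℝ,
      (∀ᵐ t ∂(volume.restrict (Icc (0:ℝ) T)), A1 t = A' t) ∧
      IsW11 T A A1 ∧ IsW11 T A1 A2 ∧
      (∀ i j, ContDiffOn ℝ 1 (fun t => A t i j) (Icc (0:ℝ) T))) ∧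
    -- Σ ∈ W^{3,1}, hence C² on [0,T]
    (∃ S1 S2 S3 : ℝ → Matrix (Fin n) (Fin n) ℝ,
      (∀ᵐ t ∂(volume.restrict (Icc (0:ℝ) T)), S1 t = S' t) ∧
      IsW11 T S S1 ∧ IsW11 T S1 S2 ∧ IsW11 T S2 S3 ∧
      (∀ i j, ContDiffOn ℝ 2 (fun t => S t i j) (Icc (0:ℝ) T))) :=
  regularity_upgrade_general T c C hT hc B A A' S S' G G' hA hS hbounds hdyn hG hGW11
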